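/- Let w : (0,∞) → ℝ be twice continuously differentiable, and define v : (0,π) → ℝ by v(R) = w(tan(R/2)) / (1 + cos R)², so that v(2·arctan r) = ((1+r²)/2)²·w(r). Then for every r > 0, writing R = 2·arctan r, one has (2/(1+r²))² · (1/sin²R) · d/dR ( sin²R · v′(R) ) = ((1+r²)/2)² · ( w″(r) + (2/r)·w′(r) ) + 3·((1+r²)/2) · r · w′(r) + 6·((1+r²)/2) · w(r). -/

import Mathlib

/-!
In the coordinate `t = tan (R / 2)` on `(0, π)` everything is rational in `t`:
`dt/dR = (1 + t²)/2`, `sin R = 2t/(1 + t²)` and `1 + cos R = 2/(1 + t²)`. Thus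
`v = ((1 + t²)/2)² w(t)`, and by the chain rule `sin²R · v′(R) = t²(1 + t²)/2 · w′(t) + 2t³ w(t)`.
A second application of the chain rule at `t = r` leaves a rational identity in `r`.
-/

open Real Set

namespace Real

lemma hasDerivAt_tan_half {S : ℝ} (h : cos (S / 2) ≠ 0) :
    HasDerivAt (fun S => tan (S / 2)) ((1 + tan (S / 2) ^ 2) / 2) S := by
  refine ((hasDerivAt_tan h).comp S ((hasDerivAt_id S).div_const 2)).congr_deriv ?_
  rw [← inv_one_add_tan_sq h]
  simp [div_eq_mul_inv]

lemma one_add_cos_eq_two_div_one_add_tan_half_sq {S : ℝ} (h : cos (S / 2) ≠ 0) :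
    1 + cos S = 2 / (1 + tan (S / 2) ^ 2) := by
  rw [div_eq_mul_inv, inv_one_add_tan_sq h, cos_sq, mul_div_cancel₀ S two_ne_zero]
  ring

lemma cos_half_pos {S : ℝ} (hS : S ∈ Ioo (-π) π) : 0 < cos (S / 2) :=
  cos_pos_of_mem_Ioo ⟨by linarith [hS.1], by linarith [hS.2]⟩

lemma tan_half_pos {S : ℝ} (hS : S ∈ Ioo 0 π) : 0 < tan (S / 2) :=
  tan_pos_of_pos_of_lt_pi_div_two (by linarith [hS.1]) (by linarith [hS.2])

end Real

lemma deriv_eq_of_eqOn_comp_tan_half {F g g' : ℝ → ℝ}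
    (hF : EqOn F (fun S => g (tan (S / 2))) (Ioo 0 π))
    (hg : ∀ t, 0 < t → HasDerivAt g (g' t) t) {S : ℝ} (hS : S ∈ Ioo 0 π) :
    deriv F S = g' (tan (S / 2)) * ((1 + tan (S / 2) ^ 2) / 2) := by
  have hcos := cos_half_pos (Ioo_subset_Ioo_left (by linarith [pi_pos]) hS)
  have hcomp := (hg _ (tan_half_pos hS)).comp S (hasDerivAt_tan_half hcos.ne')
  exact (hcomp.congr_of_eventuallyEq (hF.eventuallyEq_of_mem (isOpen_Ioo.mem_nhds hS))).deriv

lemma sin_sq_mul_deriv_eqOn {w w' v : ℝ → ℝ} (hw : ∀ r, 0 < r → HasDerivAt w (w' r) r)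
    (hv : ∀ R, v R = w (tan (R / 2)) / (1 + cos R) ^ 2) :
    EqOn (fun S => sin S ^ 2 * deriv v S)
      (fun S => tan (S / 2) ^ 2 * (1 + tan (S / 2) ^ 2) / 2 * w' (tan (S / 2))
        + 2 * tan (S / 2) ^ 3 * w (tan (S / 2))) (Ioo 0 π) := by
  have hv_eq : EqOn v (fun S => ((1 + tan (S / 2) ^ 2) / 2) ^ 2 * w (tan (S / 2))) (Ioo 0 π) := by
    intro S hS
    have hcos := cos_half_pos (Ioo_subset_Ioo_left (by linarith [pi_pos]) hS)
    rw [hv, one_add_cos_eq_two_div_one_add_tan_half_sq hcos.ne']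
    field_simp
  have hu : ∀ t, 0 < t → HasDerivAt (fun t => ((1 + t ^ 2) / 2) ^ 2 * w t)
      (((1 + t ^ 2) / 2) ^ 2 * w' t + t * (1 + t ^ 2) * w t) t := by
    intro t ht
    refine ((((hasDerivAt_pow 2 t).const_add 1).div_const 2).fun_pow 2).fun_mul (hw t ht)
      |>.congr_deriv ?_
    push_cast
    ring
  intro S hS
  dsimp only
  rw [deriv_eq_of_eqOn_comp_tan_half hv_eq hu hS, sin_eq_two_mul_tan_half_div_one_add_tan_half_sq]
  field_simp

/-- The operator `H₁` of the Penrose transform on radial functions: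
let `w` be twice differentiable on `(0,∞)` with derivatives `w'`, `w''`, and define
`v(R) = w(tan(R/2))/(1 + cos R)²` (so that `v(2 arctan r) = ((1+r²)/2)² w(r)`).
Then for `r > 0`, writing `R = 2 arctan r`,
`(2/(1+r²))² (1/sin²R) d/dR (sin²R v′(R))
  = ((1+r²)/2)² (w″(r) + (2/r) w′(r)) + 3((1+r²)/2) r w′(r) + 6((1+r²)/2) w(r)`. -/
theorem penrose_H1_radial (w w' w'' : ℝ → ℝ)
    (hw : ∀ r : ℝ, 0 < r → HasDerivAt w (w' r) r)
    (hw' : ∀ r : ℝ, 0 < r → HasDerivAt w' (w'' r) r)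
    (v : ℝ → ℝ)
    (hv : ∀ R : ℝ, v R = w (Real.tan (R / 2)) / (1 + Real.cos R) ^ 2)
    (r : ℝ) (hr : 0 < r) :
    (2 / (1 + r ^ 2)) ^ 2 *
        ((1 / Real.sin (2 * Real.arctan r) ^ 2) *
          deriv (fun S : ℝ => Real.sin S ^ 2 * deriv v S) (2 * Real.arctan r))
      = ((1 + r ^ 2) / 2) ^ 2 * (w'' r + (2 / r) * w' r)
          + 3 * (((1 + r ^ 2) / 2) * r * w' r) + 6 * (((1 + r ^ 2) / 2) * w r) := by
  have hR : 2 * arctan r ∈ Ioo 0 π := ⟨by positivity, by linarith [arctan_lt_pi_div_two r]⟩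
  have htan : tan (2 * arctan r / 2) = r := by
    rw [mul_div_cancel_left₀ _ two_ne_zero, tan_arctan]
  have hG : ∀ t, 0 < t → HasDerivAt (fun t => t ^ 2 * (1 + t ^ 2) / 2 * w' t + 2 * t ^ 3 * w t)
      (t ^ 2 * (1 + t ^ 2) / 2 * w'' t + (t + 4 * t ^ 3) * w' t + 6 * t ^ 2 * w t) t := by
    intro t ht
    refine ((((hasDerivAt_pow 2 t).fun_mul ((hasDerivAt_pow 2 t).const_add 1)).div_const 2).fun_mul
      (hw' t ht)).fun_add (((hasDerivAt_pow 3 t).const_mul 2).fun_mul (hw t ht)) |>.congr_deriv ?_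
    push_cast
    ring
  rw [deriv_eq_of_eqOn_comp_tan_half (sin_sq_mul_deriv_eqOn hw hv) hG hR,
    sin_eq_two_mul_tan_half_div_one_add_tan_half_sq, htan]
  field_simp
  ring
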